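/- For every integer N ≥ 1 and every p ∈ [0,1], one has (p - p^{2N})/(2N - 1) ≥ 0; consequently, if (K1,K2,K3) follows a multinomial distribution with N trials and category probabilities ((1-p)^2, 2p(1-p), p^2), the error-probability estimator overestimates p in expectation: E[g(K1,K2)] ≥ p. -/

import Mathlib

open Finset

/-- Joint probability mass function of `(K1, K2)` where `(K1, K2, K3)` is multinomial with
`N` trials and category probabilities `((1-p)^2, 2p(1-p), p^2)` (with `K3 = N - K1 - K2`). -/
noncomputable def multinomialPMF (N : ℕ) (p : ℝ) (k1 k2 : ℕ) : ℝ :=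
  ((N.factorial : ℝ) / (k1.factorial * k2.factorial * (N - k1 - k2).factorial)) *
    (1 - p) ^ (2 * k1) * (2 * (1 - p) * p) ^ k2 * p ^ (2 * (N - k1 - k2))

/-- The error-probability estimator. -/
noncomputable def g (k1 k2 : ℕ) : ℝ :=
  if k1 = 0 ∧ k2 = 0 then 1
  else if k2 = 0 then 0
  else (k2 : ℝ) / (2 * k1 + k2)

/-- Expected value of `g (K1, K2)` under the multinomial distribution. -/
noncomputable def expectation_g (N : ℕ) (p : ℝ) : ℝ :=
  ∑ k1 ∈ Finset.range (N + 1), ∑ k2 ∈ Finset.range (N - k1 + 1),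
    g k1 k2 * multinomialPMF N p k1 k2

/-! The number `S = 2 K1 + K2` of successful reads is binomial, `E[t^S] = ((1-p) t + p)^(2N)`.
The generating function `F(t) = E[K2 / S · t^S]` (the estimator without its value at `S = 0`)
has derivative `E[K2 · t^(S-1)]`, in which the denominator has disappeared; absorbing the
factor `K2` into the trinomial coefficient gives `F'(t) = 2N(1-p)p((1-p)t+p)^(2N-2)`.
Integrating from `0` to `1` yields the closed form `E[g] = p + (p - p^(2N)) / (2N - 1)`. -/

open Nat

theorem add_add_pow_eq_sum_trinomial {K : Type*} [Field K] [CharZero K] (M : ℕ) (a b c : K) :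
    (a + b + c) ^ M = ∑ k1 ∈ range (M + 1), ∑ k2 ∈ range (M - k1 + 1),
      (M ! : K) / (k1 ! * k2 ! * (M - k1 - k2)!) * a ^ k1 * b ^ k2 * c ^ (M - k1 - k2) := by
  rw [add_assoc, add_pow]
  refine sum_congr rfl fun k1 hk1 => ?_
  rw [add_pow, mul_sum, sum_mul]
  refine sum_congr rfl fun k2 hk2 => ?_
  rw [Nat.cast_choose K (Nat.lt_succ_iff.mp (mem_range.mp hk1)),
    Nat.cast_choose K (Nat.lt_succ_iff.mp (mem_range.mp hk2))]
  have : ((M - k1)! : K) ≠ 0 := Nat.cast_ne_zero.mpr (factorial_ne_zero _)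
  field_simp

theorem sum_sum_range_succ_shift {M : Type*} [AddCommMonoid M] (N : ℕ) (f : ℕ → ℕ → M)
    (hf : ∀ k1, f k1 0 = 0) :
    ∑ k1 ∈ range (N + 2), ∑ k2 ∈ range (N + 1 - k1 + 1), f k1 k2 =
      ∑ k1 ∈ range (N + 1), ∑ j ∈ range (N - k1 + 1), f k1 (j + 1) := by
  rw [sum_range_succ, Nat.sub_self, zero_add, sum_range_one, hf, add_zero]
  refine sum_congr rfl fun k1 hk1 => ?_
  rw [sum_range_succ', hf, add_zero, Nat.sub_add_comm (Nat.lt_succ_iff.mp (mem_range.mp hk1))]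

theorem sum_multinomialPMF_mul_pow (N : ℕ) (p t : ℝ) :
    ∑ k1 ∈ range (N + 1), ∑ k2 ∈ range (N - k1 + 1),
      multinomialPMF N p k1 k2 * t ^ (2 * k1 + k2) = ((1 - p) * t + p) ^ (2 * N) := by
  have hsq : ((1 - p) * t + p) ^ 2 = (1 - p) ^ 2 * t ^ 2 + 2 * (1 - p) * p * t + p ^ 2 := by ring
  rw [pow_mul, hsq, add_add_pow_eq_sum_trinomial]
  refine sum_congr rfl fun k1 _ => sum_congr rfl fun k2 _ => ?_
  simp only [multinomialPMF, pow_add, pow_mul, mul_pow]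
  ring

theorem succ_mul_multinomialPMF_succ (N k1 j : ℕ) (p : ℝ) :
    (j + 1 : ℝ) * multinomialPMF (N + 1) p k1 (j + 1) =
      2 * (N + 1) * (1 - p) * p * multinomialPMF N p k1 j := by
  have hsub : N + 1 - k1 - (j + 1) = N - k1 - j := by omega
  simp only [multinomialPMF, hsub, factorial_succ, pow_succ]
  push_cast
  field_simp

theorem sum_natCast_mul_multinomialPMF_mul_pow (N : ℕ) (p t : ℝ) :
    ∑ k1 ∈ range (N + 1 + 1), ∑ k2 ∈ range (N + 1 - k1 + 1),
      (k2 : ℝ) * multinomialPMF (N + 1) p k1 k2 * t ^ (2 * k1 + k2 - 1) =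
      2 * (N + 1) * (1 - p) * p * ((1 - p) * t + p) ^ (2 * N) := by
  rw [sum_sum_range_succ_shift N _ fun _ => by simp, ← sum_multinomialPMF_mul_pow, mul_sum]
  refine sum_congr rfl fun k1 _ => ?_
  rw [mul_sum]
  refine sum_congr rfl fun j _ => ?_
  rw [show 2 * k1 + (j + 1) - 1 = 2 * k1 + j by omega, Nat.cast_succ,
    succ_mul_multinomialPMF_succ]
  ring

noncomputable def estimatorGF (N : ℕ) (p t : ℝ) : ℝ :=
  ∑ k1 ∈ range (N + 1), ∑ k2 ∈ range (N - k1 + 1),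
    k2 / (2 * k1 + k2) * multinomialPMF N p k1 k2 * t ^ (2 * k1 + k2)

theorem hasDerivAt_estimatorGF (N : ℕ) (p t : ℝ) :
    HasDerivAt (estimatorGF N p)
      (∑ k1 ∈ range (N + 1), ∑ k2 ∈ range (N - k1 + 1),
        (k2 : ℝ) * multinomialPMF N p k1 k2 * t ^ (2 * k1 + k2 - 1)) t := by
  unfold estimatorGF
  refine HasDerivAt.fun_sum fun k1 _ => HasDerivAt.fun_sum fun k2 _ => ?_
  refine ((hasDerivAt_pow (2 * k1 + k2) t).const_mul
    ((k2 : ℝ) / (2 * k1 + k2) * multinomialPMF N p k1 k2)).congr_deriv ?_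
  have hcancel : (k2 : ℝ) / (2 * k1 + k2) * (2 * k1 + k2) = k2 :=
    div_mul_cancel_of_imp fun h => by norm_cast at h ⊢; omega
  push_cast
  linear_combination hcancel * multinomialPMF N p k1 k2 * t ^ (2 * k1 + k2 - 1)

theorem estimatorGF_zero (N : ℕ) (p : ℝ) : estimatorGF N p 0 = 0 := by
  refine sum_eq_zero fun k1 _ => sum_eq_zero fun k2 _ => ?_
  rcases eq_or_ne (2 * k1 + k2) 0 with h | h
  · obtain rfl : k2 = 0 := by omega
    simp
  · simp [zero_pow h]

theorem estimatorGF_one (N : ℕ) (p : ℝ) :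
    estimatorGF (N + 1) p 1 = 2 * (N + 1) * p / (2 * N + 1) * (1 - p ^ (2 * N + 1)) := by
  set G : ℝ → ℝ := fun t => 2 * (N + 1) * p / (2 * N + 1) * ((1 - p) * t + p) ^ (2 * N + 1)
  have hG (t : ℝ) : HasDerivAt G (2 * (N + 1) * (1 - p) * p * ((1 - p) * t + p) ^ (2 * N)) t := by
    have hlin : HasDerivAt (fun t : ℝ => (1 - p) * t + p) (1 - p) t := by
      simpa using ((hasDerivAt_id t).const_mul (1 - p)).add_const p
    refine ((hlin.fun_pow (2 * N + 1)).const_mul (2 * (N + 1) * p / (2 * N + 1))).congr_deriv ?_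
    push_cast
    field_simp
  have hdiff (t : ℝ) : HasDerivAt (estimatorGF (N + 1) p - G) 0 t := by
    simpa [sum_natCast_mul_multinomialPMF_mul_pow] using
      (hasDerivAt_estimatorGF (N + 1) p t).sub (hG t)
  have hconst := is_const_of_deriv_eq_zero (fun t => (hdiff t).differentiableAt)
    (fun t => (hdiff t).deriv) 1 0
  simp only [Pi.sub_apply, estimatorGF_zero, G] at hconst
  linear_combination hconst

-- At `(0, 0)` the quotient is the junk value `0 / 0 = 0`.
theorem g_eq_div_add_ite (k1 k2 : ℕ) :
    g k1 k2 = k2 / (2 * k1 + k2) + if k1 = 0 ∧ k2 = 0 then 1 else 0 := by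
  unfold g
  split_ifs <;> simp_all

theorem expectation_g_eq_add_estimatorGF (N : ℕ) (p : ℝ) :
    expectation_g N p = p ^ (2 * N) + estimatorGF N p 1 := by
  have hpmf : multinomialPMF N p 0 0 = p ^ (2 * N) := by
    simp [multinomialPMF, (factorial_pos N).ne']
  simp only [expectation_g, estimatorGF, g_eq_div_add_ite, add_mul, sum_add_distrib, one_pow,
    mul_one, ite_and, ite_mul, one_mul, zero_mul]
  simp [hpmf, add_comm]

theorem expectation_g_eq {N : ℕ} (hN : 1 ≤ N) (p : ℝ) :
    expectation_g N p = p + (p - p ^ (2 * N)) / (2 * (N : ℝ) - 1) := by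
  obtain ⟨M, rfl⟩ := Nat.exists_eq_add_of_le' hN
  rw [expectation_g_eq_add_estimatorGF, estimatorGF_one,
    show 2 * (M + 1) = 2 * M + 1 + 1 by ring, pow_succ]
  push_cast
  rw [show 2 * ((M : ℝ) + 1) - 1 = 2 * M + 1 by ring]
  field_simp
  ring

theorem error_probability_estimator_overestimates
    (N : ℕ) (hN : 1 ≤ N) (p : ℝ) (hp : p ∈ Set.Icc (0 : ℝ) 1) :
    0 ≤ (p - p ^ (2 * N)) / (2 * (N : ℝ) - 1) ∧ p ≤ expectation_g N p := by
  obtain ⟨hp0, hp1⟩ := hp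
  have hden : 0 < 2 * (N : ℝ) - 1 := by
    have : (1 : ℝ) ≤ N := by exact_mod_cast hN
    linarith
  have hbias : 0 ≤ (p - p ^ (2 * N)) / (2 * (N : ℝ) - 1) :=
    div_nonneg (sub_nonneg.mpr (pow_le_of_le_one hp0 hp1 (by omega))) hden.le
  refine ⟨hbias, ?_⟩
  rw [expectation_g_eq hN]
  linarith
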